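/- arXiv:1006.2022 — 2 statements merged into one kernel-verified Lean document; each statement's English description precedes it below -/
import Mathlib

section
/- Let M1, M2 be independent finite-valued random variables that are jointly independent of the finite-valued sequence S^n = (S_1,…,S_n). Let M12 = f12(M1,S^n), X1^n = f1(M1,S^n), and X2^n = f2(M2,M12) for deterministic functions f12, f1, f2, and let Y^n = (Y_1,…,Y_n) be such that for each i, Y_i is conditionally independent of (M1,M2,M12,S^n,X1^n,X2^n,Y^{i−1}) given (S_i,X_{1,i},X_{2,i}). Then I(M1,M2;Y^n|S^n) ≤ Σ_{i=1}^n I(X_{1,i},X_{2,i};Y_i|S_i). -/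
/-!
By the chain rule, `I(M₁,M₂;Yⁿ|Sⁿ) = Σᵢ I(M₁,M₂;Yᵢ|Yⁱ⁻¹,Sⁿ)`. As `Sᵢ` is a function of `Sⁿ`,
each summand is at most `I(M₁,M₂,Yⁱ⁻¹,Sⁿ;Yᵢ|Sᵢ)`, and enlarging the first argument to the whole
tuple `Gᵢ = (M₁,M₂,M₁₂,Sⁿ,X₁ⁿ,X₂ⁿ,Yⁱ⁻¹)` of the channel hypothesis can only increase it. Finally
`I(Gᵢ;Yᵢ|Sᵢ) = I(X₁ᵢ,X₂ᵢ;Yᵢ|Sᵢ) + I(Gᵢ;Yᵢ|X₁ᵢ,X₂ᵢ,Sᵢ)`, and the last term vanishes because `Yᵢ`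
is conditionally independent of `Gᵢ` given `(Sᵢ,X₁ᵢ,X₂ᵢ)`. The only analytic input is the
nonnegativity of conditional mutual information.
-/

open scoped BigOperators Classical
open Finset

namespace Paper

variable {Ω : Type} [Fintype Ω]

/-- `pr μ X a` is the probability that the random variable `X` takes the value `a`
under the pmf `μ` on the finite sample space `Ω`. -/
noncomputable def pr {A : Type} (μ : Ω → ℝ) (X : Ω → A) (a : A) : ℝ :=
  ∑ ω, if X ω = a then μ ω else 0

/-- `μ` is a probability mass function on the finite space `Ω`. -/
def IsPMF (μ : Ω → ℝ) : Prop := (∀ ω, 0 ≤ μ ω) ∧ ∑ ω, μ ω = 1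

/-- Shannon entropy (in bits) of the random variable `X` under `μ`. -/
noncomputable def ent {A : Type} [Fintype A] (μ : Ω → ℝ) (X : Ω → A) : ℝ :=
  -∑ a, pr μ X a * Real.logb 2 (pr μ X a)

/-- Mutual information `I(X;Y)` (in bits) under `μ`. -/
noncomputable def mi {A B : Type} [Fintype A] [Fintype B] (μ : Ω → ℝ)
    (X : Ω → A) (Y : Ω → B) : ℝ :=
  ent μ X + ent μ Y - ent μ (fun ω => (X ω, Y ω))

/-- Conditional mutual information `I(X;Y|Z)` (in bits) under `μ`. -/
noncomputable def cmi {A B C : Type} [Fintype A] [Fintype B] [Fintype C] (μ : Ω → ℝ)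
    (X : Ω → A) (Y : Ω → B) (Z : Ω → C) : ℝ :=
  ent μ (fun ω => (X ω, Z ω)) + ent μ (fun ω => (Y ω, Z ω))
    - ent μ (fun ω => (X ω, Y ω, Z ω)) - ent μ Z

/-- `X` and `Y` are conditionally independent given `Z` under `μ`:
`P(X = a, Y = b | Z = c) = P(X = a | Z = c) · P(Y = b | Z = c)`
whenever `P(Z = c) ≠ 0`. -/
def CondIndep {A B C : Type} (μ : Ω → ℝ) (X : Ω → A) (Y : Ω → B) (Z : Ω → C) : Prop :=
  ∀ a b c, pr μ Z c ≠ 0 →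
    pr μ (fun ω => (X ω, Y ω, Z ω)) (a, b, c) * pr μ Z c
      = pr μ (fun ω => (X ω, Z ω)) (a, c) * pr μ (fun ω => (Y ω, Z ω)) (b, c)

section

variable {μ : Ω → ℝ} {A B C D : Type}

lemma pr_nonneg (hμ : ∀ ω, 0 ≤ μ ω) (X : Ω → A) (a : A) : 0 ≤ pr μ X a :=
  Finset.sum_nonneg fun ω _ => by split_ifs <;> simp [hμ ω]

lemma le_pr_self (hμ : ∀ ω, 0 ≤ μ ω) (X : Ω → A) (ω : Ω) : μ ω ≤ pr μ X (X ω) := by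
  unfold pr
  simpa using Finset.single_le_sum (f := fun ω' => if X ω' = X ω then μ ω' else 0)
    (fun ω' _ => by split_ifs <;> simp [hμ ω']) (Finset.mem_univ ω)

lemma pr_self_congr {X : Ω → A} {Y : Ω → B} (h : ∀ ω ω', X ω = X ω' ↔ Y ω = Y ω') (ω : Ω) :
    pr μ X (X ω) = pr μ Y (Y ω) := by
  simp only [pr, h]

lemma sum_mul_comp_eq_sum_pr [Fintype A] (X : Ω → A) (g : A → ℝ) :
    ∑ ω, μ ω * g (X ω) = ∑ a, pr μ X a * g a := by
  simp only [pr, Finset.sum_mul, ite_mul, zero_mul]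
  rw [Finset.sum_comm]
  simp

lemma sum_pr_prod_fst [Fintype A] (X : Ω → A) (Z : Ω → C) (c : C) :
    ∑ a, pr μ (fun ω => (X ω, Z ω)) (a, c) = pr μ Z c := by
  simp only [pr, Prod.mk.injEq]
  rw [Finset.sum_comm]
  refine Finset.sum_congr rfl fun ω _ => ?_
  by_cases h : Z ω = c <;> simp [h]

section InitialSegments

variable {n : ℕ}

def initSeg (k : ℕ) (y : Fin n → B) : {j : Fin n // (j : ℕ) < k} → B := fun j => y j.1

lemma initSeg_zero_eq (y y' : Fin n → B) : initSeg 0 y = initSeg 0 y' :=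
  funext fun j => absurd j.2 (Nat.not_lt_zero _)

lemma initSeg_self_eq_iff {y y' : Fin n → B} : initSeg n y = initSeg n y' ↔ y = y' := by
  simp only [initSeg, funext_iff, Subtype.forall]
  exact ⟨fun h i => h i i.2, fun h i _ => h i⟩

lemma initSeg_succ_eq_iff {y y' : Fin n → B} (i : Fin n) :
    initSeg (i + 1) y = initSeg (i + 1) y' ↔ y i = y' i ∧ initSeg i y = initSeg i y' := by
  simp only [initSeg, funext_iff, Subtype.forall]
  refine ⟨fun h => ⟨h i (Nat.lt_succ_self _), fun j hj => h j (Nat.lt_succ_of_lt hj)⟩, ?_⟩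
  rintro ⟨hi, hlt⟩ j hj
  rcases (Nat.lt_succ_iff.1 hj).lt_or_eq with hj | hj
  · exact hlt j hj
  · rwa [Fin.ext hj]

end InitialSegments

variable [Fintype A] [Fintype B] [Fintype C] [Fintype D]

lemma ent_eq_sum (X : Ω → A) : ent μ X = -∑ ω, μ ω * Real.logb 2 (pr μ X (X ω)) := by
  rw [ent, sum_mul_comp_eq_sum_pr X (fun a => Real.logb 2 (pr μ X a))]

lemma ent_congr {X : Ω → A} {Y : Ω → B} (h : ∀ ω ω', X ω = X ω' ↔ Y ω = Y ω') :
    ent μ X = ent μ Y := by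
  simp only [ent_eq_sum, pr_self_congr h]

lemma cmi_congr {A' B' C' : Type} [Fintype A'] [Fintype B'] [Fintype C']
    {X : Ω → A} {Y : Ω → B} {Z : Ω → C} {X' : Ω → A'} {Y' : Ω → B'} {Z' : Ω → C'}
    (hX : ∀ ω ω', X ω = X ω' ↔ X' ω = X' ω') (hY : ∀ ω ω', Y ω = Y ω' ↔ Y' ω = Y' ω')
    (hZ : ∀ ω ω', Z ω = Z ω' ↔ Z' ω = Z' ω') :
    cmi μ X Y Z = cmi μ X' Y' Z' := by
  unfold cmi
  rw [ent_congr hZ, ent_congr (X := fun ω => (X ω, Z ω)) (Y := fun ω => (X' ω, Z' ω))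
    (by simp only [Prod.mk.injEq, hX, hZ, implies_true]),
    ent_congr (X := fun ω => (Y ω, Z ω)) (Y := fun ω => (Y' ω, Z' ω))
    (by simp only [Prod.mk.injEq, hY, hZ, implies_true]),
    ent_congr (X := fun ω => (X ω, Y ω, Z ω)) (Y := fun ω => (X' ω, Y' ω, Z' ω))
    (by simp only [Prod.mk.injEq, hX, hY, hZ, implies_true])]

lemma cmi_comm (X : Ω → A) (Y : Ω → B) (Z : Ω → C) : cmi μ X Y Z = cmi μ Y X Z := by
  unfold cmi
  rw [ent_congr (X := fun ω => (X ω, Y ω, Z ω)) (Y := fun ω => (Y ω, X ω, Z ω))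
    (by simp only [Prod.mk.injEq, and_left_comm, implies_true])]
  ring

lemma cmi_prod_left (X : Ω → A) (W : Ω → D) (Y : Ω → B) (Z : Ω → C) :
    cmi μ (fun ω => (X ω, W ω)) Y Z = cmi μ W Y Z + cmi μ X Y (fun ω => (W ω, Z ω)) := by
  unfold cmi
  rw [ent_congr (X := fun ω => ((X ω, W ω), Z ω)) (Y := fun ω => (X ω, W ω, Z ω))
      (by simp only [Prod.mk.injEq, and_assoc, implies_true]),
    ent_congr (X := fun ω => ((X ω, W ω), Y ω, Z ω)) (Y := fun ω => (X ω, Y ω, W ω, Z ω))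
      (by simp only [Prod.mk.injEq, and_assoc, and_left_comm, implies_true]),
    ent_congr (X := fun ω => (W ω, Y ω, Z ω)) (Y := fun ω => (Y ω, W ω, Z ω))
      (by simp only [Prod.mk.injEq, and_left_comm, implies_true])]
  ring

lemma cmi_eq_sum (X : Ω → A) (Y : Ω → B) (Z : Ω → C) :
    cmi μ X Y Z = ∑ ω, μ ω *
      (Real.logb 2 (pr μ (fun ω => (X ω, Y ω, Z ω)) (X ω, Y ω, Z ω))
        + Real.logb 2 (pr μ Z (Z ω))
        - Real.logb 2 (pr μ (fun ω => (X ω, Z ω)) (X ω, Z ω))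
        - Real.logb 2 (pr μ (fun ω => (Y ω, Z ω)) (Y ω, Z ω))) := by
  simp only [cmi, ent_eq_sum, mul_add, mul_sub, Finset.sum_add_distrib, Finset.sum_sub_distrib]
  ring

lemma sum_pr_mul_pr_div_pr (X : Ω → A) (Y : Ω → B) (Z : Ω → C) :
    ∑ a, ∑ b, ∑ c, pr μ (fun ω => (X ω, Z ω)) (a, c) * pr μ (fun ω => (Y ω, Z ω)) (b, c)
      / pr μ Z c = ∑ ω, μ ω := by
  calc _ = ∑ c, (∑ a, pr μ (fun ω => (X ω, Z ω)) (a, c))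
          * (∑ b, pr μ (fun ω => (Y ω, Z ω)) (b, c)) / pr μ Z c := by
        simp only [Finset.sum_mul_sum, Finset.sum_div]
        conv_lhs => enter [2, a]; rw [Finset.sum_comm]
        rw [Finset.sum_comm]
    _ = ∑ c, pr μ Z c := by simp only [sum_pr_prod_fst, mul_self_div_self]
    _ = ∑ ω, μ ω := by simpa using (sum_mul_comp_eq_sum_pr (μ := μ) Z fun _ => 1).symm

lemma sum_mul_pr_div_pr_le (hμ : ∀ ω, 0 ≤ μ ω) (X : Ω → A) (Y : Ω → B) (Z : Ω → C) :
    ∑ ω, μ ω * (pr μ (fun ω => (X ω, Z ω)) (X ω, Z ω) * pr μ (fun ω => (Y ω, Z ω)) (Y ω, Z ω)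
      / (pr μ (fun ω => (X ω, Y ω, Z ω)) (X ω, Y ω, Z ω) * pr μ Z (Z ω))) ≤ ∑ ω, μ ω := by
  rw [sum_mul_comp_eq_sum_pr (fun ω => (X ω, Y ω, Z ω)) fun w =>
      pr μ (fun ω => (X ω, Z ω)) (w.1, w.2.2) * pr μ (fun ω => (Y ω, Z ω)) (w.2.1, w.2.2)
        / (pr μ (fun ω => (X ω, Y ω, Z ω)) w * pr μ Z w.2.2),
    ← sum_pr_mul_pr_div_pr X Y Z]
  simp only [Fintype.sum_prod_type]
  gcongr with a _ b _ c _
  rw [← mul_div_assoc, mul_div_mul_comm]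
  exact mul_le_of_le_one_left
    (div_nonneg (mul_nonneg (pr_nonneg hμ _ _) (pr_nonneg hμ _ _)) (pr_nonneg hμ _ _))
    (div_self_le_one _)

lemma one_sub_inv_div_log_two_le_logb {x : ℝ} (hx : 0 < x) :
    (1 - x⁻¹) / Real.log 2 ≤ Real.logb 2 x :=
  div_le_div_of_nonneg_right (Real.one_sub_inv_le_log_of_pos hx) (Real.log_nonneg one_le_two)

/-- Gibbs' inequality, via `log x ≥ 1 - 1/x` applied on the sample space. -/
lemma cmi_nonneg (hμ : ∀ ω, 0 ≤ μ ω) (X : Ω → A) (Y : Ω → B) (Z : Ω → C) :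
    0 ≤ cmi μ X Y Z := by
  have hsum := sum_mul_pr_div_pr_le hμ X Y Z
  set pXYZ := pr μ (fun ω => (X ω, Y ω, Z ω))
  set pXZ := pr μ (fun ω => (X ω, Z ω))
  set pYZ := pr μ (fun ω => (Y ω, Z ω))
  set pZ := pr μ Z
  set q : Ω → ℝ := fun ω =>
    pXZ (X ω, Z ω) * pYZ (Y ω, Z ω) / (pXYZ (X ω, Y ω, Z ω) * pZ (Z ω))
  have hpt (ω : Ω) : (μ ω - μ ω * q ω) / Real.log 2 ≤ μ ω *
      (Real.logb 2 (pXYZ (X ω, Y ω, Z ω)) + Real.logb 2 (pZ (Z ω))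
        - Real.logb 2 (pXZ (X ω, Z ω)) - Real.logb 2 (pYZ (Y ω, Z ω))) := by
    rcases (hμ ω).eq_or_lt with h | h
    · simp [← h]
    have hXYZ := h.trans_le (le_pr_self hμ (fun ω => (X ω, Y ω, Z ω)) ω)
    have hXZ := h.trans_le (le_pr_self hμ (fun ω => (X ω, Z ω)) ω)
    have hYZ := h.trans_le (le_pr_self hμ (fun ω => (Y ω, Z ω)) ω)
    have hZ := h.trans_le (le_pr_self hμ Z ω)
    rw [sub_sub, ← Real.logb_mul hXYZ.ne' hZ.ne', ← Real.logb_mul hXZ.ne' hYZ.ne',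
      ← Real.logb_div (by positivity) (by positivity)]
    calc (μ ω - μ ω * q ω) / Real.log 2
        = μ ω * ((1 - (pXYZ (X ω, Y ω, Z ω) * pZ (Z ω) / (pXZ (X ω, Z ω) * pYZ (Y ω, Z ω)))⁻¹)
          / Real.log 2) := by rw [inv_div]; ring
      _ ≤ _ := mul_le_mul_of_nonneg_left (one_sub_inv_div_log_two_le_logb (by positivity)) h.le
  rw [cmi_eq_sum]
  calc 0 ≤ (∑ ω, μ ω - ∑ ω, μ ω * q ω) / Real.log 2 :=
        div_nonneg (sub_nonneg.2 hsum) (Real.log_nonneg one_le_two)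
    _ = ∑ ω, (μ ω - μ ω * q ω) / Real.log 2 := by rw [← Finset.sum_div, Finset.sum_sub_distrib]
    _ ≤ _ := Finset.sum_le_sum fun ω _ => hpt ω

lemma cmi_eq_zero_of_condIndep (hμ : ∀ ω, 0 ≤ μ ω) {X : Ω → A} {Y : Ω → B} {Z : Ω → C}
    (h : CondIndep μ X Y Z) : cmi μ X Y Z = 0 := by
  rw [cmi_eq_sum]
  refine Finset.sum_eq_zero fun ω _ => ?_
  rcases (hμ ω).eq_or_lt with hω | hω
  · simp [← hω]
  have hXYZ := hω.trans_le (le_pr_self hμ (fun ω => (X ω, Y ω, Z ω)) ω)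
  have hXZ := hω.trans_le (le_pr_self hμ (fun ω => (X ω, Z ω)) ω)
  have hYZ := hω.trans_le (le_pr_self hμ (fun ω => (Y ω, Z ω)) ω)
  have hZ := hω.trans_le (le_pr_self hμ Z ω)
  rw [sub_sub, ← Real.logb_mul hXYZ.ne' hZ.ne', ← Real.logb_mul hXZ.ne' hYZ.ne',
    h (X ω) (Y ω) (Z ω) hZ.ne', sub_self, mul_zero]

lemma cmi_eq_cmi_comp_add_cmi (G : Ω → A) (f : A → D) (Y : Ω → B) (Z : Ω → C) :
    cmi μ G Y Z = cmi μ (fun ω => f (G ω)) Y Z + cmi μ G Y (fun ω => (f (G ω), Z ω)) := by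
  rw [← cmi_prod_left]
  refine cmi_congr (fun ω ω' => ?_) (fun _ _ => Iff.rfl) (fun _ _ => Iff.rfl)
  simp only [Prod.mk.injEq]
  exact (and_iff_left_of_imp (congrArg f)).symm

lemma cmi_comp_left_le (hμ : ∀ ω, 0 ≤ μ ω) (G : Ω → A) (f : A → D) (Y : Ω → B) (Z : Ω → C) :
    cmi μ (fun ω => f (G ω)) Y Z ≤ cmi μ G Y Z := by
  rw [cmi_eq_cmi_comp_add_cmi G f]
  exact le_add_of_nonneg_right (cmi_nonneg hμ _ _ _)

lemma cmi_eq_of_condIndep (hμ : ∀ ω, 0 ≤ μ ω) (G : Ω → A) (f : A → D) (Y : Ω → B) (Z : Ω → C)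
    (h : CondIndep μ Y G (fun ω => (Z ω, f (G ω)))) :
    cmi μ G Y Z = cmi μ (fun ω => f (G ω)) Y Z := by
  rw [cmi_eq_cmi_comp_add_cmi G f, cmi_comm G, add_eq_left]
  rw [cmi_congr (fun _ _ => Iff.rfl) (fun _ _ => Iff.rfl)
    (Z' := fun ω => (Z ω, f (G ω))) (fun _ _ => by simp only [Prod.mk.injEq, and_comm])]
  exact cmi_eq_zero_of_condIndep hμ h

lemma cmi_le_cmi_prod_left (hμ : ∀ ω, 0 ≤ μ ω) (X : Ω → A) (Y : Ω → B) (V : Ω → C)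
    (f : C → D) : cmi μ X Y V ≤ cmi μ (fun ω => (X ω, V ω)) Y (fun ω => f (V ω)) := by
  rw [cmi_prod_left, cmi_congr (fun _ _ => Iff.rfl) (fun _ _ => Iff.rfl)
    (Z' := fun ω => (V ω, f (V ω))) (fun ω ω' => ?_)]
  · exact le_add_of_nonneg_left (cmi_nonneg hμ _ _ _)
  simp only [Prod.mk.injEq]
  exact (and_iff_left_of_imp (congrArg f)).symm

variable {n : ℕ}

lemma cmi_pi_eq_sum (X : Ω → A) (Y : Fin n → Ω → B) (Z : Ω → C) :
    cmi μ X (fun ω i => Y i ω) Z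
      = ∑ i : Fin n, cmi μ X (Y i) (fun ω => ((fun j : {j : Fin n // j < i} => Y j.1 ω), Z ω)) := by
  -- `F k = H(X | Y₀,…,Y_{k-1}, Z)`, so the summands telescope
  let F : ℕ → ℝ := fun k => ent μ (fun ω => (X ω, initSeg k (fun i => Y i ω), Z ω))
    - ent μ (fun ω => (initSeg k (fun i => Y i ω), Z ω))
  have hstep (i : Fin n) :
      cmi μ X (Y i) (fun ω => (initSeg i (fun i => Y i ω), Z ω)) = F i - F (i + 1) := by
    have h1 : ent μ (fun ω => (X ω, Y i ω, initSeg i (fun i => Y i ω), Z ω))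
        = ent μ (fun ω => (X ω, initSeg (i + 1) (fun i => Y i ω), Z ω)) :=
      ent_congr fun _ _ => by simp only [Prod.mk.injEq, initSeg_succ_eq_iff, and_assoc]
    have h2 : ent μ (fun ω => (Y i ω, initSeg i (fun i => Y i ω), Z ω))
        = ent μ (fun ω => (initSeg (i + 1) (fun i => Y i ω), Z ω)) :=
      ent_congr fun _ _ => by simp only [Prod.mk.injEq, initSeg_succ_eq_iff, and_assoc]
    simp only [F, ← h1, ← h2, cmi]
    ring
  have hends : cmi μ X (fun ω i => Y i ω) Z = F 0 - F n := by
    simp only [F, cmi]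
    rw [ent_congr (X := fun ω => (X ω, initSeg 0 (fun i => Y i ω), Z ω))
        (Y := fun ω => (X ω, Z ω)) fun _ _ => by
          simp only [Prod.mk.injEq, eq_true (initSeg_zero_eq _ _), true_and],
      ent_congr (X := fun ω => (initSeg 0 (fun i => Y i ω), Z ω)) (Y := Z) fun _ _ => by
        simp only [Prod.mk.injEq, eq_true (initSeg_zero_eq _ _), true_and],
      ent_congr (X := fun ω => (X ω, initSeg n (fun i => Y i ω), Z ω))
        (Y := fun ω => (X ω, (fun i => Y i ω), Z ω)) (by simp [initSeg_self_eq_iff]),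
      ent_congr (X := fun ω => (initSeg n (fun i => Y i ω), Z ω))
        (Y := fun ω => ((fun i => Y i ω), Z ω)) (by simp [initSeg_self_eq_iff])]
    ring
  rw [hends, ← Finset.sum_range_sub', ← Fin.sum_univ_eq_sum_range]
  exact (Finset.sum_congr rfl fun i _ => hstep i).symm

end

theorem converse_bound_sum_rate_one_way_general
    {Ω : Type} [Fintype Ω] (μ : Ω → ℝ) (hμ : IsPMF μ)
    {n : ℕ} {𝒮 𝒳₁ 𝒳₂ 𝒴 ℳ₁ ℳ₂ ℳ₁₂ : Type}
    [Fintype 𝒮] [Fintype 𝒳₁] [Fintype 𝒳₂] [Fintype 𝒴]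
    [Fintype ℳ₁] [Fintype ℳ₂] [Fintype ℳ₁₂]
    (S : Fin n → Ω → 𝒮) (Y : Fin n → Ω → 𝒴) (M1 : Ω → ℳ₁) (M2 : Ω → ℳ₂)
    (M12 : Ω → ℳ₁₂)
    (X1 : Fin n → Ω → 𝒳₁)
    (X2 : Fin n → Ω → 𝒳₂)
    (hY : ∀ i : Fin n, CondIndep μ (Y i)
      (fun ω => (M1 ω, M2 ω, M12 ω, (fun j => S j ω),
        (fun j => X1 j ω), (fun j => X2 j ω),
        (fun j : {j : Fin n // j < i} => Y j.1 ω)))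
      (fun ω => (S i ω, X1 i ω, X2 i ω))) :
    cmi μ (fun ω => (M1 ω, M2 ω)) (fun ω => fun i => Y i ω)
        (fun ω => fun i => S i ω)
      ≤ ∑ i : Fin n, cmi μ (fun ω => (X1 i ω, X2 i ω)) (Y i) (S i) := by
  let past (i : Fin n) (ω : Ω) := fun j : {j : Fin n // j < i} => Y j.1 ω
  let G (i : Fin n) (ω : Ω) := (M1 ω, M2 ω, M12 ω, (fun j => S j ω),
    (fun j => X1 j ω), (fun j => X2 j ω), past i ω)
  calc _ = ∑ i, cmi μ (fun ω => (M1 ω, M2 ω)) (Y i) (fun ω => (past i ω, fun j => S j ω)) :=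
        cmi_pi_eq_sum _ _ _
    _ ≤ ∑ i, cmi μ (fun ω => ((M1 ω, M2 ω), past i ω, fun j => S j ω)) (Y i) (S i) :=
        Finset.sum_le_sum fun i _ => cmi_le_cmi_prod_left hμ.1 (fun ω => (M1 ω, M2 ω)) (Y i)
          (fun ω => (past i ω, fun j => S j ω)) fun v => v.2 i
    _ ≤ ∑ i, cmi μ (G i) (Y i) (S i) :=
        Finset.sum_le_sum fun i _ => cmi_comp_left_le hμ.1 (G i)
          (fun g => ((g.1, g.2.1), g.2.2.2.2.2.2, g.2.2.2.1)) (Y i) (S i)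
    _ = _ := Finset.sum_congr rfl fun i _ =>
        cmi_eq_of_condIndep hμ.1 (G i) (fun g => (g.2.2.2.2.1 i, g.2.2.2.2.2.1 i)) (Y i) (S i)
          (hY i)

/-- Converse step for the sum rate in Theorem 1: under the same assumptions as for the
single-rate bound, `I(M₁,M₂;Yⁿ|Sⁿ) ≤ Σᵢ I(X₁ᵢ,X₂ᵢ;Yᵢ|Sᵢ)`. -/
theorem converse_bound_sum_rate_one_way
    {Ω : Type} [Fintype Ω] (μ : Ω → ℝ) (hμ : IsPMF μ)
    {n : ℕ} {𝒮 𝒳₁ 𝒳₂ 𝒴 ℳ₁ ℳ₂ ℳ₁₂ : Type}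
    [Fintype 𝒮] [Fintype 𝒳₁] [Fintype 𝒳₂] [Fintype 𝒴]
    [Fintype ℳ₁] [Fintype ℳ₂] [Fintype ℳ₁₂]
    (S : Fin n → Ω → 𝒮) (Y : Fin n → Ω → 𝒴) (M1 : Ω → ℳ₁) (M2 : Ω → ℳ₂)
    (f12 : ℳ₁ → (Fin n → 𝒮) → ℳ₁₂)
    (f1 : ℳ₁ → (Fin n → 𝒮) → Fin n → 𝒳₁)
    (f2 : ℳ₂ → ℳ₁₂ → Fin n → 𝒳₂)
    (M12 : Ω → ℳ₁₂) (hM12 : ∀ ω, M12 ω = f12 (M1 ω) (fun i => S i ω))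
    (X1 : Fin n → Ω → 𝒳₁) (hX1 : ∀ i ω, X1 i ω = f1 (M1 ω) (fun j => S j ω) i)
    (X2 : Fin n → Ω → 𝒳₂) (hX2 : ∀ i ω, X2 i ω = f2 (M2 ω) (M12 ω) i)
    (hindep : ∀ (m1 : ℳ₁) (m2 : ℳ₂) (s : Fin n → 𝒮),
      pr μ (fun ω => (M1 ω, M2 ω, fun i => S i ω)) (m1, m2, s)
        = pr μ M1 m1 * pr μ M2 m2 * pr μ (fun ω => fun i => S i ω) s)
    (hY : ∀ i : Fin n, CondIndep μ (Y i)
      (fun ω => (M1 ω, M2 ω, M12 ω, (fun j => S j ω),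
        (fun j => X1 j ω), (fun j => X2 j ω),
        (fun j : {j : Fin n // j < i} => Y j.1 ω)))
      (fun ω => (S i ω, X1 i ω, X2 i ω))) :
    cmi μ (fun ω => (M1 ω, M2 ω)) (fun ω => fun i => Y i ω)
        (fun ω => fun i => S i ω)
      ≤ ∑ i : Fin n, cmi μ (fun ω => (X1 i ω, X2 i ω)) (Y i) (S i) :=
  converse_bound_sum_rate_one_way_general μ hμ S Y M1 M2 M12 X1 X2 hY

end Paper
end

section
/- Let the pairs (S_{1,i},S_{2,i}), i = 1,…,n, be i.i.d. finite-valued, let M1, M2 be finite-valued random variables that are mutually independent and jointly independent of (S1^n,S2^n), and let M12 = f12(M1,S1^n) and M21 = f21(M2,M12,S2^n) for deterministic functions f12, f21. Then for every i ∈ {1,…,n}, M21 is conditionally independent of S_{1,i} given (S_{2,i}, M12, S1^{i−1}, S2_{i+1}^n); that is, the Markov chain M21 − (S_{2,i}, M12, S1^{i−1}, S2_{i+1}^n) − S_{1,i} holds. -/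
open scoped BigOperators Classical
open Finset

namespace Paper

variable {Ω : Type} [Fintype Ω]

/-! Regroup `(M₁, M₂, S₁ⁿ, S₂ⁿ)` into a block `U = (M₂, S₂ⁱ⁻¹)` seen only by terminal 2, a block
`V = (M₁, S₁ᵢ, S₁ᵢ₊₁ⁿ)` seen only by terminal 1, and a shared block `W = (S₁ⁱ⁻¹, S₂ᵢ, S₂ᵢ₊₁ⁿ)`.
Independence of the messages and the product form of the i.i.d. law make the pmf of `(U, V, W)`
factor as `φ(u, w) ψ(v, w)`. The conditioning variable `Z = (W, M₁₂)` is a function of `(V, W)`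
from which `W` can be read off, `M₂₁` is a function of `(U, Z)` and `S₁ᵢ` of `V`; so
`P(M₂₁ = a, S₁ᵢ = b, Z = c)` factors as `g(a, c) h(b, c)`, which is conditional independence. -/

lemma pr_comp {τ A : Type} [Fintype τ] (μ : Ω → ℝ) (T : Ω → τ) (g : τ → A) (a : A) :
    pr μ (fun ω => g (T ω)) a = ∑ t, if g t = a then pr μ T t else 0 := by
  simp only [pr, ← Finset.sum_filter]
  rw [← Finset.sum_fiberwise_of_maps_to (t := univ.filter (g · = a)) (g := T) (by simp)]
  refine Finset.sum_congr rfl fun t ht => Finset.sum_congr ?_ fun _ _ => rfl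
  ext ω
  simp_all

lemma pr_equiv {τ A : Type} (μ : Ω → ℝ) (T : Ω → τ) (e : τ ≃ A) (a : A) :
    pr μ (fun ω => e (T ω)) a = pr μ T (e.symm a) := by
  simp only [pr, ← Equiv.eq_symm_apply]

lemma pr_eq_sum_pr_pair {A C : Type} [Fintype A] (μ : Ω → ℝ) (X : Ω → A) (Z : Ω → C) (c : C) :
    pr μ Z c = ∑ a, pr μ (fun ω => (X ω, Z ω)) (a, c) := by
  simp only [pr, Prod.mk.injEq, ite_and]
  rw [Finset.sum_comm]
  simp

lemma pr_pair_eq_sum_pr_triple {A B C : Type} [Fintype B] (μ : Ω → ℝ)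
    (X : Ω → A) (Y : Ω → B) (Z : Ω → C) (a : A) (c : C) :
    pr μ (fun ω => (X ω, Z ω)) (a, c) = ∑ b, pr μ (fun ω => (X ω, Y ω, Z ω)) (a, b, c) := by
  simp only [pr, Prod.mk.injEq, ite_and]
  rw [Finset.sum_comm]
  simp

theorem condIndep_of_pr_eq_mul {A B C : Type} [Fintype A] [Fintype B] (μ : Ω → ℝ)
    (X : Ω → A) (Y : Ω → B) (Z : Ω → C) (g : A → C → ℝ) (h : B → C → ℝ)
    (hXYZ : ∀ a b c, pr μ (fun ω => (X ω, Y ω, Z ω)) (a, b, c) = g a c * h b c) :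
    CondIndep μ X Y Z := by
  intro a b c _
  have hXZ : pr μ (fun ω => (X ω, Z ω)) (a, c) = g a c * ∑ b, h b c := by
    rw [pr_pair_eq_sum_pr_triple μ X Y Z]
    simp only [hXYZ, Finset.mul_sum]
  have hYZ : ∀ b, pr μ (fun ω => (Y ω, Z ω)) (b, c) = (∑ a, g a c) * h b c := fun b => by
    rw [pr_eq_sum_pr_pair μ X]
    simp only [hXYZ, Finset.sum_mul]
  have hZ : pr μ Z c = (∑ a, g a c) * ∑ b, h b c := by
    rw [pr_eq_sum_pr_pair μ Y Z]
    simp only [hYZ, Finset.mul_sum]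
  rw [hXYZ, hXZ, hYZ, hZ]
  ring

theorem condIndep_of_factorization {α β γ A B C : Type} [Fintype α] [Fintype β] [Fintype γ]
    [Fintype A] [Fintype B] (μ : Ω → ℝ) (U : Ω → α) (V : Ω → β) (W : Ω → γ)
    (φ : α → γ → ℝ) (ψ : β → γ → ℝ)
    (hUVW : ∀ u v w, pr μ (fun ω => (U ω, V ω, W ω)) (u, v, w) = φ u w * ψ v w)
    (H : β → γ → C) (K : C → γ) (hK : ∀ v w, K (H v w) = w) (F : α → C → A) (G : β → C → B)
    (X : Ω → A) (Y : Ω → B) (Z : Ω → C) (hZ : ∀ ω, Z ω = H (V ω) (W ω))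
    (hX : ∀ ω, X ω = F (U ω) (Z ω)) (hY : ∀ ω, Y ω = G (V ω) (Z ω)) :
    CondIndep μ X Y Z := by
  refine condIndep_of_pr_eq_mul μ X Y Z
    (fun a c => ∑ u, if F u c = a then φ u (K c) else 0)
    (fun b c => ∑ v, if G v c = b ∧ H v (K c) = c then ψ v (K c) else 0) fun a b c => ?_
  let e : α × β × γ → A × B × C := fun t =>
    (F t.1 (H t.2.1 t.2.2), G t.2.1 (H t.2.1 t.2.2), H t.2.1 t.2.2)
  have hXYZ : (fun ω => (X ω, Y ω, Z ω)) = fun ω => e (U ω, V ω, W ω) := by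
    funext ω
    simp only [e, hX, hY, hZ]
  rw [hXYZ, pr_comp μ (fun ω => (U ω, V ω, W ω)) e, Fintype.sum_prod_type, Fintype.sum_mul_sum]
  refine Finset.sum_congr rfl fun u _ => ?_
  rw [Fintype.sum_prod_type]
  refine Finset.sum_congr rfl fun v _ => ?_
  -- `H v w = c` pins `w` down to `K c`
  rw [Finset.sum_eq_single (K c)]
  · by_cases hH : H v (K c) = c
    · simp only [e, hH, hUVW, Prod.mk.injEq, and_true, ite_and, ite_mul, mul_ite, zero_mul, mul_zero]
      split_ifs <;> rfl
    · simp [e, hH]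
  · intro w _ hw
    have hH : H v w ≠ c := fun h => hw (h ▸ hK v w).symm
    simp [e, hH]
  · simp

section SplitAt

variable {n : ℕ} (i : Fin n)

def splitAtEquiv (α : Type) :
    (Fin n → α) ≃ ({j // j < i} → α) × α × ({j // i < j} → α) where
  toFun s := (fun j => s j, s i, fun j => s j)
  invFun x j := if h : j < i then x.1 ⟨j, h⟩ else if h' : i < j then x.2.2 ⟨j, h'⟩ else x.2.1
  left_inv s := funext fun j => by
    rcases lt_trichotomy j i with h | rfl | h
    · simp [h]
    · simp
    · simp [h, h.not_gt]
  right_inv x := by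
    obtain ⟨l, y, r⟩ := x
    ext j
    · simp [j.2]
    · simp
    · simp [j.2, j.2.not_gt]

lemma prod_eq_prod_lt_mul_mul_prod_gt {M : Type} [CommMonoid M] (g : Fin n → M) :
    ∏ j, g j = (∏ j : {j // j < i}, g j) * (g i * ∏ j : {j // i < j}, g j) := by
  have hge : univ.filter (fun j => ¬ j < i) = Ici i := by
    ext j
    simp
  rw [← Finset.prod_filter_mul_prod_filter_not univ (· < i), hge, ← mul_prod_Ioi_eq_prod_Ici,
    Finset.prod_subtype (p := (· < i)) _ (fun j => by simp) g,
    Finset.prod_subtype (Ioi i) (fun j => mem_Ioi) g]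

lemma prod_splitAtEquiv_symm {α M : Type} [CommMonoid M] (f : α → M)
    (x : ({j // j < i} → α) × α × ({j // i < j} → α)) :
    ∏ j, f ((splitAtEquiv i α).symm x j) = (∏ j, f (x.1 j)) * (f x.2.1 * ∏ j, f (x.2.2 j)) := by
  conv_rhs => rw [← (splitAtEquiv i α).apply_symm_apply x]
  exact prod_eq_prod_lt_mul_mul_prod_gt i _

end SplitAt

def blockEquiv {n : ℕ} (i : Fin n) (ℳ₁ ℳ₂ 𝒮₁ 𝒮₂ : Type) :
    ℳ₁ × ℳ₂ × (Fin n → 𝒮₁ × 𝒮₂) ≃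
      (ℳ₂ × ({j // j < i} → 𝒮₂)) × (ℳ₁ × 𝒮₁ × ({j // i < j} → 𝒮₁)) ×
        (({j // j < i} → 𝒮₁) × 𝒮₂ × ({j // i < j} → 𝒮₂)) :=
  ((Equiv.refl ℳ₁).prodCongr ((Equiv.refl ℳ₂).prodCongr (splitAtEquiv i _))).trans
    { toFun := fun t => ((t.2.1, fun j => (t.2.2.1 j).2),
        (t.1, t.2.2.2.1.1, fun j => (t.2.2.2.2 j).1),
        (fun j => (t.2.2.1 j).1, t.2.2.2.1.2, fun j => (t.2.2.2.2 j).2))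
      invFun := fun x => (x.2.1.1, x.1.1, fun j => (x.2.2.1 j, x.1.2 j),
        (x.2.1.2.1, x.2.2.2.1), fun j => (x.2.1.2.2 j, x.2.2.2.2 j))
      left_inv := fun _ => rfl
      right_inv := fun _ => rfl }

lemma pr_blocks_eq_mul {n : ℕ} {𝒮₁ 𝒮₂ ℳ₁ ℳ₂ : Type} (μ : Ω → ℝ) (i : Fin n)
    (S1 : Fin n → Ω → 𝒮₁) (S2 : Fin n → Ω → 𝒮₂) (M1 : Ω → ℳ₁) (M2 : Ω → ℳ₂)
    (P1 : ℳ₁ → ℝ) (P2 : ℳ₂ → ℝ) (q : 𝒮₁ × 𝒮₂ → ℝ)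
    (hT : ∀ m1 m2 s, pr μ (fun ω => (M1 ω, M2 ω, fun j => (S1 j ω, S2 j ω))) (m1, m2, s)
      = P1 m1 * P2 m2 * ∏ j, q (s j))
    (u : ℳ₂ × ({j // j < i} → 𝒮₂)) (v : ℳ₁ × 𝒮₁ × ({j // i < j} → 𝒮₁))
    (w : ({j // j < i} → 𝒮₁) × 𝒮₂ × ({j // i < j} → 𝒮₂)) :
    pr μ (fun ω => ((M2 ω, fun j : {j // j < i} => S2 j.1 ω),
        (M1 ω, S1 i ω, fun j : {j // i < j} => S1 j.1 ω),
        (fun j : {j // j < i} => S1 j.1 ω, S2 i ω, fun j : {j // i < j} => S2 j.1 ω))) (u, v, w)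
      = (P2 u.1 * ∏ j, q (w.1 j, u.2 j))
        * (P1 v.1 * (q (v.2.1, w.2.1) * ∏ j, q (v.2.2 j, w.2.2 j))) := by
  refine (pr_equiv μ (fun ω => (M1 ω, M2 ω, fun j => (S1 j ω, S2 j ω)))
    (blockEquiv i ℳ₁ ℳ₂ 𝒮₁ 𝒮₂) (u, v, w)).trans ((hT v.1 u.1 ((splitAtEquiv i _).symm
      (fun j => (w.1 j, u.2 j), (v.2.1, w.2.1), fun j => (v.2.2 j, w.2.2 j)))).trans ?_)
  rw [prod_splitAtEquiv_symm]
  ring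

theorem markov_chain_M21_general
    {Ω : Type} [Fintype Ω] (μ : Ω → ℝ)
    {n : ℕ} {𝒮₁ 𝒮₂ ℳ₁ ℳ₂ ℳ₁₂ ℳ₂₁ : Type}
    [Fintype 𝒮₁] [Fintype 𝒮₂] [Fintype ℳ₁] [Fintype ℳ₂] [Fintype ℳ₂₁]
    (S1 : Fin n → Ω → 𝒮₁) (S2 : Fin n → Ω → 𝒮₂) (M1 : Ω → ℳ₁) (M2 : Ω → ℳ₂)
    (q : 𝒮₁ × 𝒮₂ → ℝ)
    (hiid : ∀ s : Fin n → 𝒮₁ × 𝒮₂,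
      pr μ (fun ω => fun i => (S1 i ω, S2 i ω)) s = ∏ i, q (s i))
    (hindep : ∀ (m1 : ℳ₁) (m2 : ℳ₂) (s : Fin n → 𝒮₁ × 𝒮₂),
      pr μ (fun ω => (M1 ω, M2 ω, fun i => (S1 i ω, S2 i ω))) (m1, m2, s)
        = pr μ M1 m1 * pr μ M2 m2 * pr μ (fun ω => fun i => (S1 i ω, S2 i ω)) s)
    (f12 : ℳ₁ → (Fin n → 𝒮₁) → ℳ₁₂)
    (f21 : ℳ₂ → ℳ₁₂ → (Fin n → 𝒮₂) → ℳ₂₁)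
    (M12 : Ω → ℳ₁₂) (hM12 : ∀ ω, M12 ω = f12 (M1 ω) (fun i => S1 i ω))
    (M21 : Ω → ℳ₂₁) (hM21 : ∀ ω, M21 ω = f21 (M2 ω) (M12 ω) (fun i => S2 i ω)) :
    ∀ i : Fin n,
      CondIndep μ M21 (S1 i)
        (fun ω => (S2 i ω, M12 ω, (fun j : {j : Fin n // j < i} => S1 j.1 ω),
          (fun j : {j : Fin n // i < j} => S2 j.1 ω))) := by
  intro i
  have hT : ∀ m1 m2 s, pr μ (fun ω => (M1 ω, M2 ω, fun j => (S1 j ω, S2 j ω))) (m1, m2, s)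
      = pr μ M1 m1 * pr μ M2 m2 * ∏ j, q (s j) := fun m1 m2 s => by rw [hindep, hiid]
  refine condIndep_of_factorization μ _ _ _ _ _ (pr_blocks_eq_mul μ i S1 S2 M1 M2 _ _ q hT)
    (fun v w => (w.2.1, f12 v.1 ((splitAtEquiv i 𝒮₁).symm (w.1, v.2.1, v.2.2)), w.1, w.2.2))
    (fun z => (z.2.2.1, z.1, z.2.2.2)) (fun _ _ => rfl)
    (fun u z => f21 u.1 z.2.1 ((splitAtEquiv i 𝒮₂).symm (u.2, z.1, z.2.2.2))) (fun v _ => v.2.1)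
    M21 (S1 i) _ (fun ω => ?_) (fun ω => ?_) (fun _ => rfl)
  · rw [hM12, ← (splitAtEquiv i 𝒮₁).symm_apply_apply fun j => S1 j ω]
    rfl
  · rw [hM21, ← (splitAtEquiv i 𝒮₂).symm_apply_apply fun j => S2 j ω]
    rfl

/-- Markov chain (45) in the converse of Theorem 2: with `(S₁ᵢ,S₂ᵢ)` i.i.d., `M₁,M₂`
mutually independent and independent of the states, `M₁₂ = f₁₂(M₁,S₁ⁿ)` and
`M₂₁ = f₂₁(M₂,M₁₂,S₂ⁿ)`, for every `i` the chain
`M₂₁ − (S₂ᵢ, M₁₂, S₁ⁱ⁻¹, S₂ᵢ₊₁ⁿ) − S₁ᵢ` holds. -/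
theorem markov_chain_M21
    {Ω : Type} [Fintype Ω] (μ : Ω → ℝ) (hμ : IsPMF μ)
    {n : ℕ} {𝒮₁ 𝒮₂ ℳ₁ ℳ₂ ℳ₁₂ ℳ₂₁ : Type}
    [Fintype 𝒮₁] [Fintype 𝒮₂] [Fintype ℳ₁] [Fintype ℳ₂] [Fintype ℳ₁₂] [Fintype ℳ₂₁]
    (S1 : Fin n → Ω → 𝒮₁) (S2 : Fin n → Ω → 𝒮₂) (M1 : Ω → ℳ₁) (M2 : Ω → ℳ₂)
    (q : 𝒮₁ × 𝒮₂ → ℝ) (hq : IsPMF q)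
    (hiid : ∀ s : Fin n → 𝒮₁ × 𝒮₂,
      pr μ (fun ω => fun i => (S1 i ω, S2 i ω)) s = ∏ i, q (s i))
    (hindep : ∀ (m1 : ℳ₁) (m2 : ℳ₂) (s : Fin n → 𝒮₁ × 𝒮₂),
      pr μ (fun ω => (M1 ω, M2 ω, fun i => (S1 i ω, S2 i ω))) (m1, m2, s)
        = pr μ M1 m1 * pr μ M2 m2 * pr μ (fun ω => fun i => (S1 i ω, S2 i ω)) s)
    (f12 : ℳ₁ → (Fin n → 𝒮₁) → ℳ₁₂)
    (f21 : ℳ₂ → ℳ₁₂ → (Fin n → 𝒮₂) → ℳ₂₁)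
    (M12 : Ω → ℳ₁₂) (hM12 : ∀ ω, M12 ω = f12 (M1 ω) (fun i => S1 i ω))
    (M21 : Ω → ℳ₂₁) (hM21 : ∀ ω, M21 ω = f21 (M2 ω) (M12 ω) (fun i => S2 i ω)) :
    ∀ i : Fin n,
      CondIndep μ M21 (S1 i)
        (fun ω => (S2 i ω, M12 ω, (fun j : {j : Fin n // j < i} => S1 j.1 ω),
          (fun j : {j : Fin n // i < j} => S2 j.1 ω))) :=
  markov_chain_M21_general μ S1 S2 M1 M2 q hiid hindep f12 f21 M12 hM12 M21 hM21

end Paper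
end
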